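/- arXiv:2012.10524 — 2 statements merged into one kernel-verified Lean document; each statement's English description precedes it below -/
import Mathlib

section
/- For dominant weights λ, μ of a compact simple Lie group and the Casimir eigenvalue Cas_λ = ⟨λ, λ+2δ⟩, if λ = Σ a_r ω_r is a nonnegative integer combination of fundamental weights ω_r, then Cas_λ ≥ Σ a_r Cas_{ω_r}. -/
open scoped RealInnerProductSpace

/-- If `λ = Σ a_r ω_r` is a nonnegative integer combination of the fundamental weights
`ω_r` of a compact simple Lie group (which are dominant, so have pairwise nonnegative
inner products), then the Casimir eigenvalue `Cas λ = ⟪λ, λ + 2δ⟫` from Freudenthal's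
formula satisfies `Cas λ ≥ Σ a_r Cas ω_r`. -/
theorem casimir_ge_sum_fundamental {V : Type*} [NormedAddCommGroup V] [InnerProductSpace ℝ V]
    {ℓ : ℕ} (ω : Fin ℓ → V) (δ : V) (Cas : V → ℝ)
    (hCas : ∀ lam : V, Cas lam = ⟪lam, lam + (2 : ℝ) • δ⟫)
    (hdom : ∀ i j, 0 ≤ ⟪ω i, ω j⟫)
    (a : Fin ℓ → ℕ) (lam : V) (hlam : lam = ∑ i, a i • ω i) :
    (∑ i, (a i : ℝ) * Cas (ω i)) ≤ Cas lam := by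
  have hc : ∀ i : Fin ℓ, (a i • ω i) = (a i : ℝ) • ω i := fun i =>
    (Nat.cast_smul_eq_nsmul ℝ _ _).symm
  subst hlam
  simp only [hCas, hc, inner_add_right, real_inner_smul_right, sum_inner, inner_sum,
    real_inner_smul_left]
  have key : ∑ i, (a i : ℝ) * ⟪ω i, ω i⟫ ≤
      ∑ i, ∑ j, (a i : ℝ) * ((a j : ℝ) * ⟪ω i, ω j⟫) := by
    calc ∑ i, (a i : ℝ) * ⟪ω i, ω i⟫
        ≤ ∑ i, (a i : ℝ) * ((a i : ℝ) * ⟪ω i, ω i⟫) := by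
          refine Finset.sum_le_sum fun i _ => ?_
          have h1 : (a i : ℝ) ≤ (a i : ℝ) * (a i : ℝ) := by
            rcases Nat.eq_zero_or_pos (a i) with h | h
            · simp [h]
            · have : (1 : ℝ) ≤ (a i : ℝ) := by exact_mod_cast h
              nlinarith
          nlinarith [hdom i i]
      _ ≤ ∑ i, ∑ j, (a i : ℝ) * ((a j : ℝ) * ⟪ω i, ω j⟫) := by
          refine Finset.sum_le_sum fun i _ => ?_
          exact Finset.single_le_sum (f := fun j => (a i : ℝ) * ((a j : ℝ) * ⟪ω i, ω j⟫))
            (fun j _ => mul_nonneg (Nat.cast_nonneg _)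
              (mul_nonneg (Nat.cast_nonneg _) (hdom i j))) (Finset.mem_univ i)
  have expand : ∀ i : Fin ℓ,
      (a i : ℝ) * (⟪ω i, ω i⟫ + 2 * ⟪ω i, δ⟫) =
      (a i : ℝ) * ⟪ω i, ω i⟫ + 2 * ((a i : ℝ) * ⟪ω i, δ⟫) := fun i => by ring
  simp only [expand, Finset.sum_add_distrib, ← Finset.mul_sum]
  have rr : ∑ x, (a x : ℝ) * ∑ i, (a i : ℝ) * ⟪ω i, ω x⟫ =
      ∑ i, ∑ j, (a i : ℝ) * ((a j : ℝ) * ⟪ω i, ω j⟫) := by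
    simp only [Finset.mul_sum]
    rw [Finset.sum_comm]
    refine Finset.sum_congr rfl fun i _ => Finset.sum_congr rfl fun j _ => ?_
    rw [real_inner_comm]
    ring
  rw [rr]
  linarith
end

section
/- If λ is a dominant weight of SU(n), n ≥ 3, with Casimir eigenvalue Cas_λ < 1 (with respect to the negative Killing form inner product), then λ ∈ {0, ω_1, ω_{n−1}, ω_2, ω_{n−2}} ∪ ({ω_3, ω_{n−3}} if n ∈ {6,7}). -/
/-- The fundamental weight `ω_r` of `SU(n)`, realized in the standard way inside `ℝⁿ`. -/
noncomputable def suFundWeight (n r : ℕ) : EuclideanSpace ℝ (Fin n) :=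
  WithLp.toLp 2 (fun i => if (i : ℕ) < r then 1 - (r : ℝ) / n else -((r : ℝ) / n))

/-- The half-sum `δ` of the positive roots of `su(n)`: `δ_i = (n + 1)/2 − i`. -/
noncomputable def suHalfSumPosRoots (n : ℕ) : EuclideanSpace ℝ (Fin n) :=
  WithLp.toLp 2 (fun i => ((n : ℝ) + 1) / 2 - ((i : ℕ) + 1))

/-- Freudenthal's formula `Cas_λ = ⟨λ, λ + 2δ⟩` for the negative Killing form inner
product of `su(n)`. -/
noncomputable def suCasimir (n : ℕ) (lam : EuclideanSpace ℝ (Fin n)) : ℝ :=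
  (1 / (2 * (n : ℝ))) * inner ℝ lam (lam + (2 : ℝ) • suHalfSumPosRoots n)

/-!
On the dominant cone, the `ℕ`-span of the `ω_r`, both `⟪·, ·⟫` and `Cas` are nonnegative,
since `⟪ω_r, ω_s⟫ = r (n - s) / n` for `r ≤ s` and `⟪ω_r, δ⟫ = r (n - r) / 2`. Hence
`Cas (x + y) = Cas x + Cas y + ⟪x, y⟫ / n` is monotone along the cone. A dominant weight other than
`0` and the `ω_r` is `ω_r + ω_s + μ` with `μ` dominant, and
`Cas (ω_r + ω_s) ≥ 2 Cas ω_1 + 1 / n² = Cas (ω_1 + ω_{n-1}) = 1`. Finally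
`Cas ω_r = (n + 1) r (n - r) / (2 n²)` is `≥ 1` as soon as `3 ≤ r ≤ n - 3` and `n ≥ 8`.
-/

open Finset

lemma Fin.sum_ite_val_lt {M : Type*} [AddCommMonoid M] {n r : ℕ} (hr : r ≤ n) (f : ℕ → M) :
    ∑ i : Fin n, (if (i : ℕ) < r then f i else 0) = ∑ i ∈ range r, f i := by
  rw [Fin.sum_univ_eq_sum_range (fun i => if i < r then f i else 0), ← sum_filter]
  congr 1
  ext i
  simp only [mem_filter, mem_range]
  omega

lemma inner_suFundWeight (n r : ℕ) (v : EuclideanSpace ℝ (Fin n)) :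
    inner ℝ (suFundWeight n r) v =
      ∑ i : Fin n, (if (i : ℕ) < r then v i else 0) - r / n * ∑ i, v i := by
  simp only [PiLp.inner_apply, suFundWeight, mul_sum, ← sum_sub_distrib]
  refine sum_congr rfl fun i _ => ?_
  simp only [RCLike.inner_apply, conj_trivial]
  split_ifs <;> ring

lemma inner_suFundWeight_of_sum_eq_zero (n r : ℕ) {v : EuclideanSpace ℝ (Fin n)}
    (hv : ∑ i, v i = 0) :
    inner ℝ (suFundWeight n r) v = ∑ i : Fin n, if (i : ℕ) < r then v i else 0 := by
  rw [inner_suFundWeight, hv, mul_zero, sub_zero]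

lemma sum_suFundWeight (n r : ℕ) (hr : r ≤ n) : ∑ i, suFundWeight n r i = 0 := by
  rcases n.eq_zero_or_pos with rfl | hn
  · simp
  have : ∀ i : Fin n, suFundWeight n r i = (if (i : ℕ) < r then 1 else 0) - r / n := by
    intro i; simp only [suFundWeight]; split_ifs <;> ring
  rw [sum_congr rfl fun i _ => this i, sum_sub_distrib, Fin.sum_ite_val_lt hr (fun _ => (1 : ℝ))]
  simp only [sum_const, card_range, card_univ, Fintype.card_fin, nsmul_eq_mul]
  field_simp
  ring

lemma sum_range_suHalfSumPosRoots (n r : ℕ) :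
    ∑ i ∈ range r, (((n : ℝ) + 1) / 2 - ((i : ℝ) + 1)) = r * (n - r) / 2 := by
  induction r with
  | zero => simp
  | succ r ih => rw [sum_range_succ, ih]; push_cast; ring

lemma sum_ite_suHalfSumPosRoots (n r : ℕ) (hr : r ≤ n) :
    ∑ i : Fin n, (if (i : ℕ) < r then suHalfSumPosRoots n i else 0) = r * (n - r) / 2 := by
  rw [← sum_range_suHalfSumPosRoots]
  exact Fin.sum_ite_val_lt hr (fun i => ((n : ℝ) + 1) / 2 - ((i : ℝ) + 1))

lemma sum_suHalfSumPosRoots (n : ℕ) : ∑ i, suHalfSumPosRoots n i = 0 := by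
  simpa using sum_ite_suHalfSumPosRoots n n le_rfl

lemma inner_suFundWeight_suHalfSumPosRoots (n r : ℕ) (hr : r ≤ n) :
    inner ℝ (suFundWeight n r) (suHalfSumPosRoots n) = r * (n - r) / 2 := by
  rw [inner_suFundWeight_of_sum_eq_zero n r (sum_suHalfSumPosRoots n),
    sum_ite_suHalfSumPosRoots n r hr]

lemma inner_suFundWeight_suFundWeight (n r s : ℕ) (hrs : r ≤ s) (hs : s ≤ n) :
    inner ℝ (suFundWeight n r) (suFundWeight n s) = r * (n - s) / n := by
  rw [inner_suFundWeight_of_sum_eq_zero n r (sum_suFundWeight n s hs)]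
  have : ∀ i : Fin n, (if (i : ℕ) < r then suFundWeight n s i else 0) =
      if (i : ℕ) < r then 1 - (s : ℝ) / n else 0 := by
    intro i
    split_ifs with h
    · simp [suFundWeight, h.trans_le hrs]
    · rfl
  rw [sum_congr rfl fun i _ => this i, Fin.sum_ite_val_lt (hrs.trans hs) (fun _ => 1 - (s : ℝ) / n),
    sum_const, card_range, nsmul_eq_mul]
  rcases n.eq_zero_or_pos with rfl | hn
  · simp [show r = 0 by omega]
  field_simp

lemma inner_suFundWeight_suFundWeight_nonneg (n r s : ℕ) (hr : r ≤ n) (hs : s ≤ n) :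
    0 ≤ inner ℝ (suFundWeight n r) (suFundWeight n s) := by
  wlog hrs : r ≤ s generalizing r s
  · rw [real_inner_comm]
    exact this s r hs hr (le_of_not_ge hrs)
  have hsn : (s : ℝ) ≤ n := by exact_mod_cast hs
  rw [inner_suFundWeight_suFundWeight n r s hrs hs]
  have := sub_nonneg.2 hsn
  positivity

lemma suCasimir_eq (n : ℕ) (x : EuclideanSpace ℝ (Fin n)) :
    suCasimir n x = (‖x‖ ^ 2 + 2 * inner ℝ x (suHalfSumPosRoots n)) / (2 * n) := by
  rw [suCasimir, inner_add_right, real_inner_smul_right, real_inner_self_eq_norm_sq]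
  ring

lemma suCasimir_add (n : ℕ) (x y : EuclideanSpace ℝ (Fin n)) :
    suCasimir n (x + y) = suCasimir n x + suCasimir n y + inner ℝ x y / n := by
  simp only [suCasimir_eq, norm_add_sq_real, inner_add_left]
  ring

lemma suCasimir_suFundWeight (n r : ℕ) (hr : r ≤ n) :
    suCasimir n (suFundWeight n r) = (n + 1) * r * (n - r) / (2 * n ^ 2) := by
  rw [suCasimir_eq, ← real_inner_self_eq_norm_sq, inner_suFundWeight_suFundWeight n r r le_rfl hr,
    inner_suFundWeight_suHalfSumPosRoots n r hr]
  rcases n.eq_zero_or_pos with rfl | hn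
  · simp
  field_simp
  ring

def suDominantWeights (n : ℕ) : AddSubmonoid (EuclideanSpace ℝ (Fin n)) :=
  AddSubmonoid.closure (suFundWeight n '' Set.Icc 1 (n - 1))

namespace suDominantWeights

variable {n : ℕ} {x y v : EuclideanSpace ℝ (Fin n)}

lemma suFundWeight_mem {r : ℕ} (hr : r ∈ Set.Icc 1 (n - 1)) :
    suFundWeight n r ∈ suDominantWeights n :=
  AddSubmonoid.subset_closure (Set.mem_image_of_mem _ hr)

lemma sum_nsmul_suFundWeight_mem (a : ℕ → ℕ) :
    ∑ r ∈ Icc 1 (n - 1), a r • suFundWeight n r ∈ suDominantWeights n :=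
  AddSubmonoid.sum_mem _ fun r hr =>
    AddSubmonoid.nsmul_mem _ (suFundWeight_mem (by simpa using hr)) _

lemma eq_zero_or_exists_add (hx : x ∈ suDominantWeights n) :
    x = 0 ∨ ∃ r ∈ Set.Icc 1 (n - 1), ∃ y ∈ suDominantWeights n, x = suFundWeight n r + y := by
  induction hx using AddSubmonoid.closure_induction_left with
  | zero => exact .inl rfl
  | add_left _ hr y hy _ =>
    obtain ⟨r, hr, rfl⟩ := hr
    exact .inr ⟨r, hr, y, hy, rfl⟩

lemma inner_nonneg_of_forall (hv : ∀ r ∈ Set.Icc 1 (n - 1), 0 ≤ inner ℝ (suFundWeight n r) v)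
    (hx : x ∈ suDominantWeights n) : 0 ≤ inner ℝ x v := by
  induction hx using AddSubmonoid.closure_induction with
  | mem _ hr => obtain ⟨r, hr, rfl⟩ := hr; exact hv r hr
  | zero => simp
  | add _ _ _ _ hx hy => rw [inner_add_left]; exact add_nonneg hx hy

lemma inner_nonneg (hx : x ∈ suDominantWeights n) (hy : y ∈ suDominantWeights n) :
    0 ≤ inner ℝ x y := by
  refine inner_nonneg_of_forall (fun r ⟨_, hr⟩ => ?_) hx
  rw [real_inner_comm]
  exact inner_nonneg_of_forall
    (fun s ⟨_, hs⟩ => inner_suFundWeight_suFundWeight_nonneg n s r (by omega) (by omega)) hy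

lemma suCasimir_nonneg (hx : x ∈ suDominantWeights n) : 0 ≤ suCasimir n x := by
  have hδ : 0 ≤ inner ℝ x (suHalfSumPosRoots n) := by
    refine inner_nonneg_of_forall (fun r ⟨_, hr⟩ => ?_) hx
    have hrn : (r : ℝ) ≤ n := by exact_mod_cast (show r ≤ n by omega)
    rw [inner_suFundWeight_suHalfSumPosRoots n r (by omega)]
    have := sub_nonneg.2 hrn
    positivity
  rw [suCasimir_eq]
  positivity

lemma suCasimir_add_le (hx : x ∈ suDominantWeights n) (hy : y ∈ suDominantWeights n) :
    suCasimir n x + suCasimir n y ≤ suCasimir n (x + y) := by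
  rw [suCasimir_add]
  have := inner_nonneg hx hy
  linarith [div_nonneg this n.cast_nonneg]

lemma suCasimir_le_add (hx : x ∈ suDominantWeights n) (hy : y ∈ suDominantWeights n) :
    suCasimir n x ≤ suCasimir n (x + y) := by
  linarith [suCasimir_add_le hx hy, suCasimir_nonneg hy]

end suDominantWeights

lemma le_suCasimir_suFundWeight {n r : ℕ} (hr : r ∈ Set.Icc 1 (n - 1)) :
    ((n : ℝ) ^ 2 - 1) / (2 * n ^ 2) ≤ suCasimir n (suFundWeight n r) := by
  obtain ⟨hr1, hrn⟩ := hr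
  rw [suCasimir_suFundWeight n r (by omega)]
  have hr1' : (1 : ℝ) ≤ r := by exact_mod_cast hr1
  have hrn' : (r : ℝ) + 1 ≤ n := by exact_mod_cast (show r + 1 ≤ n by omega)
  gcongr
  nlinarith [mul_nonneg (sub_nonneg.2 hr1') (sub_nonneg.2 hrn')]

lemma one_le_suCasimir_suFundWeight_add {n r s : ℕ} (hr : r ∈ Set.Icc 1 (n - 1))
    (hs : s ∈ Set.Icc 1 (n - 1)) : 1 ≤ suCasimir n (suFundWeight n r + suFundWeight n s) := by
  wlog hrs : r ≤ s generalizing r s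
  · rw [add_comm]
    exact this hs hr (le_of_not_ge hrs)
  obtain ⟨hr1, -⟩ := hr
  obtain ⟨-, hs⟩ := hs
  have hn : (2 : ℝ) ≤ n := by exact_mod_cast (show 2 ≤ n by omega)
  have hinner : 1 / n ≤ inner ℝ (suFundWeight n r) (suFundWeight n s) := by
    rw [inner_suFundWeight_suFundWeight n r s hrs (by omega)]
    have hr1' : (1 : ℝ) ≤ r := by exact_mod_cast hr1
    have hsn : (s : ℝ) + 1 ≤ n := by exact_mod_cast (show s + 1 ≤ n by omega)
    gcongr
    nlinarith
  rw [suCasimir_add]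
  calc (1 : ℝ) = (n ^ 2 - 1) / (2 * n ^ 2) + (n ^ 2 - 1) / (2 * n ^ 2) + 1 / n / n := by
        field_simp
        ring
    _ ≤ _ := by
      gcongr
      exacts [le_suCasimir_suFundWeight ⟨hr1, by omega⟩, le_suCasimir_suFundWeight ⟨by omega, hs⟩]

lemma eq_of_suCasimir_suFundWeight_lt_one {n r : ℕ} (hr : r ∈ Set.Icc 1 (n - 1))
    (h : suCasimir n (suFundWeight n r) < 1) :
    r = 1 ∨ r = n - 1 ∨ r = 2 ∨ r = n - 2 ∨ ((n = 6 ∨ n = 7) ∧ (r = 3 ∨ r = n - 3)) := by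
  obtain ⟨hr1, hrn⟩ := hr
  suffices ¬(3 ≤ r ∧ r + 3 ≤ n ∧ 8 ≤ n) by omega
  rintro ⟨hr3, hr3n, hn⟩
  have hr3' : (3 : ℝ) ≤ r := by exact_mod_cast hr3
  have hr3n' : (r : ℝ) + 3 ≤ n := by exact_mod_cast hr3n
  have hn' : (8 : ℝ) ≤ n := by exact_mod_cast hn
  rw [suCasimir_suFundWeight n r (by omega), div_lt_one (by positivity)] at h
  nlinarith [mul_nonneg (sub_nonneg.2 hr3') (sub_nonneg.2 hr3n')]

theorem suCasimir_subcritical_classification_general (n : ℕ) (a : ℕ → ℕ)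
    (lam : EuclideanSpace ℝ (Fin n))
    (hlam : lam = ∑ r ∈ Finset.Icc 1 (n - 1), a r • suFundWeight n r)
    (h : suCasimir n lam < 1) :
    lam = 0 ∨ lam = suFundWeight n 1 ∨ lam = suFundWeight n (n - 1) ∨
      lam = suFundWeight n 2 ∨ lam = suFundWeight n (n - 2) ∨
      ((n = 6 ∨ n = 7) ∧ (lam = suFundWeight n 3 ∨ lam = suFundWeight n (n - 3))) := by
  have hdom : lam ∈ suDominantWeights n := hlam ▸ suDominantWeights.sum_nsmul_suFundWeight_mem a
  obtain rfl | ⟨r, hr, μ, hμ, rfl⟩ := suDominantWeights.eq_zero_or_exists_add hdom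
  · exact .inl rfl
  obtain rfl | ⟨s, hs, ν, hν, rfl⟩ := suDominantWeights.eq_zero_or_exists_add hμ
  · rw [add_zero] at h ⊢
    rcases eq_of_suCasimir_suFundWeight_lt_one hr h with rfl | rfl | rfl | rfl | ⟨hn, rfl | rfl⟩ <;>
      tauto
  · have hrs : suFundWeight n r + suFundWeight n s ∈ suDominantWeights n :=
      add_mem (suDominantWeights.suFundWeight_mem hr) (suDominantWeights.suFundWeight_mem hs)
    have := suDominantWeights.suCasimir_le_add hrs hν
    rw [add_assoc] at this
    linarith [one_le_suCasimir_suFundWeight_add hr hs]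

/-- If `λ = Σ_{r=1}^{n−1} a_r ω_r` is a dominant weight of `SU(n)`, `n ≥ 3`, whose Casimir
eigenvalue (with respect to the negative Killing form inner product) satisfies
`Cas_λ < 1`, then `λ ∈ {0, ω₁, ω_{n−1}, ω₂, ω_{n−2}}`, together with `{ω₃, ω_{n−3}}` in
the cases `n = 6, 7`. -/
theorem suCasimir_subcritical_classification (n : ℕ) (hn : 3 ≤ n) (a : ℕ → ℕ)
    (lam : EuclideanSpace ℝ (Fin n))
    (hlam : lam = ∑ r ∈ Finset.Icc 1 (n - 1), a r • suFundWeight n r)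
    (h : suCasimir n lam < 1) :
    lam = 0 ∨ lam = suFundWeight n 1 ∨ lam = suFundWeight n (n - 1) ∨
      lam = suFundWeight n 2 ∨ lam = suFundWeight n (n - 2) ∨
      ((n = 6 ∨ n = 7) ∧ (lam = suFundWeight n 3 ∨ lam = suFundWeight n (n - 3))) :=
  suCasimir_subcritical_classification_general n a lam hlam h
end
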